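/- arXiv:1803.01055 — 2 statements merged into one kernel-verified Lean document; each statement's English description precedes it below -/
import Mathlib

section
/- Let k ≥ 0 and let w be a k-11-representant of a simple graph G. Then (i) the concatenation r(π(w))·w is a (k+1)-11-representant of G; (ii) the concatenation w·r(σ(w)) is a (k+1)-11-representant of G; and (iii) if k = 0, then the concatenation w·w is a 1-11-representant of G. -/
/-- Number of occurrences of the consecutive pattern 11 in a word,
i.e. the number of positions `i` with `u i = u (i+1)`. -/
def pattern11Count {V : Type*} [DecidableEq V] (u : List V) : ℕ :=
  (u.zip u.tail).countP (fun p => decide (p.1 = p.2))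

/-- `w` is a `k`-11-representant of the simple graph `G`: every vertex occurs in `w`,
and two distinct vertices are adjacent iff the subword of `w` induced by them contains
at most `k` occurrences of the consecutive pattern 11. -/
def IsK11Rep {V : Type*} [DecidableEq V] (G : SimpleGraph V) (k : ℕ) (w : List V) : Prop :=
  (∀ v : V, v ∈ w) ∧
  ∀ x y : V, x ≠ y →
    (G.Adj x y ↔ pattern11Count (w.filter (fun a => decide (a = x ∨ a = y))) ≤ k)

/-- A simple graph is `k`-11-representable if it has a `k`-11-representant. -/
def K11Representable {V : Type*} [DecidableEq V] (G : SimpleGraph V) (k : ℕ) : Prop :=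
  ∃ w : List V, IsK11Rep G k w

/-- A graph is `t`-uniformly `k`-11-representable if it has a `k`-11-representant in which
every vertex occurs exactly `t` times. -/
def UniformK11Rep {V : Type*} [DecidableEq V] (G : SimpleGraph V) (t k : ℕ) : Prop :=
  ∃ w : List V, IsK11Rep G k w ∧ ∀ v : V, w.count v = t

/-- The final permutation `σ(w)`: distinct letters of `w` in order of last occurrence. -/
def finalPerm {V : Type*} [DecidableEq V] (w : List V) : List V := w.dedup

/-- The initial permutation `π(w)`: distinct letters of `w` in order of first occurrence. -/
def initPerm {V : Type*} [DecidableEq V] (w : List V) : List V := (w.reverse.dedup).reverse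

/-! Each of the three words restricts, on a pair `{x, y}`, to `u' ++ u` or `u ++ u'` where
`u = w|_{x,y}` is non-empty and `u'` is a word without repeated letters whose letter at the
junction is the one of `u` there. So `u'` contributes no 11 of its own and exactly one 11 at
the junction, shifting every count by one. For `w·w` the count becomes `2c + ε` with
`ε ≤ 1`, and `2c + ε ≤ 2k + 1 ↔ c ≤ k`. -/

namespace List

variable {α : Type*} [DecidableEq α]

theorem filter_dedup (p : α → Bool) (l : List α) : l.dedup.filter p = (l.filter p).dedup := by
  induction l with
  | nil => rfl
  | cons a l ih =>
    by_cases hp : p a <;> by_cases hm : a ∈ l <;>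
      simp [hp, hm, dedup_cons_of_mem, dedup_cons_of_notMem, mem_filter, ih]

theorem getLast?_dedup (l : List α) : l.dedup.getLast? = l.getLast? := by
  induction l with
  | nil => rfl
  | cons a l ih =>
    by_cases hm : a ∈ l
    · have hl : l ≠ [] := ne_nil_of_mem hm
      rw [dedup_cons_of_mem hm, ih, getLast?_cons, getLast?_eq_some_getLast hl]
      rfl
    · rw [dedup_cons_of_notMem hm, getLast?_cons, getLast?_cons, ih]

end List

section Pattern11

variable {V : Type*} [DecidableEq V]

theorem pattern11Count_cons (x : V) (l : List V) :
    pattern11Count (x :: l) = (if l.head? = some x then 1 else 0) + pattern11Count l := by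
  cases l with
  | nil => rfl
  | cons y l =>
    by_cases h : x = y
    · simp [pattern11Count, h, Nat.add_comm]
    · simp [pattern11Count, h, Ne.symm h]

theorem pattern11Count_append {a : List V} (ha : a ≠ []) (b : List V) :
    pattern11Count (a ++ b) =
      pattern11Count a + pattern11Count b + (if a.getLast? = b.head? then 1 else 0) := by
  induction a with
  | nil => exact absurd rfl ha
  | cons x a ih =>
    rcases eq_or_ne a [] with rfl | ha'
    · rw [List.singleton_append, pattern11Count_cons]
      change _ = 0 + _ + _
      simp [eq_comm, add_comm]
    · rw [List.cons_append, pattern11Count_cons, List.head?_append_of_ne_nil _ ha', ih ha',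
        pattern11Count_cons, List.getLast?_cons_of_ne_nil ha']
      omega

theorem pattern11Count_eq_zero_of_nodup {l : List V} (h : l.Nodup) : pattern11Count l = 0 := by
  induction l with
  | nil => rfl
  | cons x l ih =>
    rw [pattern11Count_cons, ih h.of_cons, if_neg]
    exact fun hx => (List.nodup_cons.1 h).1 (List.mem_of_head? hx)

theorem pattern11Count_reverse_dedup_append {u : List V} (hu : u ≠ []) :
    pattern11Count (u.reverse.dedup ++ u) = pattern11Count u + 1 := by
  have hd : u.reverse.dedup ≠ [] := by simpa [List.dedup_eq_nil]
  rw [pattern11Count_append hd, pattern11Count_eq_zero_of_nodup (List.nodup_dedup _),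
    List.getLast?_dedup, List.getLast?_reverse, if_pos rfl, zero_add]

theorem pattern11Count_append_dedup_reverse {u : List V} (hu : u ≠ []) :
    pattern11Count (u ++ u.dedup.reverse) = pattern11Count u + 1 := by
  rw [pattern11Count_append hu,
    pattern11Count_eq_zero_of_nodup (List.nodup_reverse.2 (List.nodup_dedup _)),
    List.head?_reverse, List.getLast?_dedup, if_pos rfl, add_zero]

theorem pattern11Count_append_self_le_iff {u : List V} (hu : u ≠ []) (k : ℕ) :
    pattern11Count (u ++ u) ≤ 2 * k + 1 ↔ pattern11Count u ≤ k := by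
  rw [pattern11Count_append hu]
  split_ifs <;> omega

end Pattern11

section Representants

variable {V : Type*} [DecidableEq V] {G : SimpleGraph V} {k : ℕ} {w : List V}

theorem IsK11Rep.filter_ne_nil (hw : IsK11Rep G k w) (x y : V) :
    w.filter (fun a => decide (a = x ∨ a = y)) ≠ [] :=
  List.ne_nil_of_mem (List.mem_filter.2 ⟨hw.1 x, by simp⟩)

theorem IsK11Rep.of_pattern11Count_le_iff {k' : ℕ} {w' : List V} (hw : IsK11Rep G k w)
    (hsub : w ⊆ w')
    (hcount : ∀ x y : V, x ≠ y → (pattern11Count (w'.filter (fun a => decide (a = x ∨ a = y)))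
      ≤ k' ↔ pattern11Count (w.filter (fun a => decide (a = x ∨ a = y))) ≤ k)) :
    IsK11Rep G k' w' :=
  ⟨fun v => hsub (hw.1 v), fun x y hxy => (hw.2 x y hxy).trans (hcount x y hxy).symm⟩

theorem initPerm_reverse_filter (p : V → Bool) (w : List V) :
    (initPerm w).reverse.filter p = (w.filter p).reverse.dedup := by
  rw [initPerm, List.reverse_reverse, List.filter_dedup, List.filter_reverse]

theorem finalPerm_reverse_filter (p : V → Bool) (w : List V) :
    (finalPerm w).reverse.filter p = (w.filter p).dedup.reverse := by
  rw [finalPerm, List.filter_reverse, List.filter_dedup]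

theorem IsK11Rep.reverse_initPerm_append (hw : IsK11Rep G k w) :
    IsK11Rep G (k + 1) ((initPerm w).reverse ++ w) :=
  hw.of_pattern11Count_le_iff (List.subset_append_right _ _) fun x y _ => by
    rw [List.filter_append, initPerm_reverse_filter,
      pattern11Count_reverse_dedup_append (hw.filter_ne_nil x y), Nat.add_le_add_iff_right]

theorem IsK11Rep.append_reverse_finalPerm (hw : IsK11Rep G k w) :
    IsK11Rep G (k + 1) (w ++ (finalPerm w).reverse) :=
  hw.of_pattern11Count_le_iff (List.subset_append_left _ _) fun x y _ => by
    rw [List.filter_append, finalPerm_reverse_filter,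
      pattern11Count_append_dedup_reverse (hw.filter_ne_nil x y), Nat.add_le_add_iff_right]

theorem IsK11Rep.append_self (hw : IsK11Rep G k w) : IsK11Rep G (2 * k + 1) (w ++ w) :=
  hw.of_pattern11Count_le_iff (List.subset_append_left _ _) fun x y _ => by
    rw [List.filter_append, pattern11Count_append_self_le_iff (hw.filter_ne_nil x y)]

end Representants

theorem extension_lemma_general {V : Type*} [DecidableEq V] (k : ℕ)
    (G : SimpleGraph V) (w : List V) (hw : IsK11Rep G k w) :
    IsK11Rep G (k + 1) ((initPerm w).reverse ++ w) ∧
    IsK11Rep G (k + 1) (w ++ (finalPerm w).reverse) ∧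
    (k = 0 → IsK11Rep G 1 (w ++ w)) :=
  ⟨hw.reverse_initPerm_append, hw.append_reverse_finalPerm, fun hk => by
    subst hk
    exact hw.append_self⟩

/-- if `w` is a `k`-11-representant of `G`, then `r(π(w))·w` and
`w·r(σ(w))` are `(k+1)`-11-representants of `G`, and if `k = 0` then `w·w` is a
`1`-11-representant of `G`. -/
theorem extension_lemma {V : Type*} [DecidableEq V] [Fintype V] (k : ℕ)
    (G : SimpleGraph V) (w : List V) (hw : IsK11Rep G k w) :
    IsK11Rep G (k + 1) ((initPerm w).reverse ++ w) ∧
    IsK11Rep G (k + 1) (w ++ (finalPerm w).reverse) ∧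
    (k = 0 → IsK11Rep G 1 (w ++ w)) :=
  extension_lemma_general k G w hw
end

section
/- Let k ≥ 0 and let G be a simple graph whose vertex set is the union of two sets V₁ and V₂ with V₁ ∩ V₂ = {z} for a single vertex z, such that G has no edge joining a vertex of V₁ \ {z} to a vertex of V₂ \ {z}. If the induced subgraphs G[V₁] and G[V₂] are both k-11-representable, then G is k-11-representable. (In other words, glueing two k-11-representable graphs at a single vertex yields a k-11-representable graph.) -/
/-!
Let `vᵢ` be a representant of `G[Vᵢ]` and `σ(vᵢ)` its final permutation. Appending to `vᵢ` any
prefix of `σ(vᵢ) σ(vᵢ) ⋯` creates no new 11 in any subword induced by two letters, so we may pad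
`v₁` and `v₂` until `z` occurs equally often in both, with the first word ending in `z` and every
other letter of the second one occurring after its last `z`. Interleaving the two words block by
block between consecutive occurrences of `z` gives a word whose restriction to either side is the
padded representant of that side. Finally append `k + 1` copies of `A z A B z B`, where `A` and
`B` list `V₁ \ {z}` and `V₂ \ {z}` in order of last occurrence: a pair inside one side sees the
alternating continuation `cdcd`, `uzuz` or `zuzu` of its subword, while a pair `a ∈ A`, `b ∈ B`
sees `aabb`, i.e. two new 11s per copy.
-/

section Pattern11

variable {α : Type*} [DecidableEq α]

@[simp] theorem pattern11Count_nil : pattern11Count ([] : List α) = 0 := rfl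

@[simp] theorem pattern11Count_singleton (a : α) : pattern11Count [a] = 0 := rfl

theorem pattern11Count_cons_cons (a b : α) (l : List α) :
    pattern11Count (a :: b :: l) = pattern11Count (b :: l) + if a = b then 1 else 0 := by
  simp [pattern11Count, List.countP_cons]

theorem pattern11Count_append_s5 (u v : List α) :
    pattern11Count (u ++ v) =
      pattern11Count u + pattern11Count v +
        pattern11Count (u.getLast?.toList ++ v.head?.toList) := by
  induction u with
  | nil => cases v <;> simp
  | cons a u ih =>
    cases u with
    | nil => cases v <;> simp [pattern11Count_cons_cons]
    | cons b u =>
      simp only [List.cons_append, pattern11Count_cons_cons, List.getLast?_cons_cons] at ih ⊢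
      omega

theorem pattern11Count_append_of_getLast?_ne {u v : List α} (h : u.getLast? ≠ v.head?) :
    pattern11Count (u ++ v) = pattern11Count u + pattern11Count v := by
  rw [pattern11Count_append_s5]
  rcases hu : u.getLast? with _ | a <;> rcases hv : v.head? with _ | b <;>
    simp_all [pattern11Count_cons_cons]

theorem pattern11Count_add_le_append (u v : List α) :
    pattern11Count u + pattern11Count v ≤ pattern11Count (u ++ v) := by
  rw [pattern11Count_append_s5]; omega

theorem pattern11Count_map {β : Type*} [DecidableEq β] {f : α → β} (hf : Function.Injective f)
    (l : List α) : pattern11Count (l.map f) = pattern11Count l := by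
  simp [pattern11Count, ← List.map_tail, List.zip_map, List.countP_map, Function.comp_def,
    hf.eq_iff]

end Pattern11

section Alternating

variable {α : Type*} [DecidableEq α]

open List

theorem pattern11Count_append_flatten_replicate {u s : List α} (hs : pattern11Count s = 0)
    (hs' : s.getLast? ≠ s.head?) (hu : u.getLast? = s.getLast?) (n : ℕ) :
    pattern11Count (u ++ (replicate n s).flatten) = pattern11Count u := by
  induction n generalizing u with
  | zero => simp
  | succ n ih =>
    have hsne : s ≠ [] := by rintro rfl; exact hs' rfl
    have hus : pattern11Count (u ++ s) = pattern11Count u := by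
      rw [pattern11Count_append_of_getLast?_ne (hu ▸ hs'), hs, Nat.add_zero]
    rw [replicate_succ, flatten_cons, ← append_assoc,
      ih (by rw [getLast?_append_of_ne_nil _ hsne]), hus]

theorem pattern11Count_append_of_prefix_flatten_replicate {u s P : List α}
    (hs : pattern11Count s = 0) (hs' : s.getLast? ≠ s.head?) (hu : u.getLast? = s.getLast?)
    {n : ℕ} (hP : P <+: (replicate n s).flatten) :
    pattern11Count (u ++ P) = pattern11Count u := by
  obtain ⟨t, ht⟩ := hP
  have hle := pattern11Count_add_le_append (u ++ P) t
  rw [append_assoc, ht, pattern11Count_append_flatten_replicate hs hs' hu] at hle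
  have hge := pattern11Count_add_le_append u P
  omega

theorem mul_le_pattern11Count_append_flatten_replicate (u s : List α) (n : ℕ) :
    n * pattern11Count s ≤ pattern11Count (u ++ (replicate n s).flatten) := by
  induction n generalizing u with
  | zero => simp
  | succ n ih =>
    rw [replicate_succ', flatten_append, ← append_assoc, flatten_singleton, Nat.succ_mul]
    have := pattern11Count_add_le_append (u ++ (replicate n s).flatten) s
    have := ih u
    omega

theorem pattern11Count_append_flatten_replicate_alternating {u : List α} {c d : α} (hcd : c ≠ d)
    (hu : u.getLast? = some d) (n : ℕ) :
    pattern11Count (u ++ (replicate n [c, d, c, d]).flatten) = pattern11Count u :=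
  pattern11Count_append_flatten_replicate (by simp [pattern11Count_cons_cons, hcd, hcd.symm])
    (by simpa using hcd.symm) (by simpa using hu) n

end Alternating

namespace List

theorem getLast?_eq_some_of_forall_eq {α : Type*} {l : List α} {a : α} (ha : a ∈ l)
    (h : ∀ b ∈ l, b = a) : l.getLast? = some a := by
  obtain ⟨b, hb⟩ := Option.isSome_iff_exists.1 (getLast?_isSome.2 (ne_nil_of_mem ha))
  rw [hb, h b (mem_of_getLast? hb)]

variable {α : Type*} [DecidableEq α]

theorem dedup_filter (p : α → Bool) (l : List α) : (l.filter p).dedup = l.dedup.filter p := by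
  induction l with
  | nil => rfl
  | cons a l ih =>
    by_cases ha : a ∈ l <;> by_cases hpa : p a <;>
      simp [ha, hpa, dedup_cons_of_mem, dedup_cons_of_notMem, ih]

end List

section Pairs

variable {α : Type*} [DecidableEq α]

open List

def pairPred (x y : α) (a : α) : Bool := decide (a = x ∨ a = y)

theorem pairPred_comm (x y : α) : pairPred x y = pairPred y x := by
  funext a; simp [pairPred, or_comm]

theorem exists_dedup_filter_pairPred {l : List α} {x y : α} (hx : x ∈ l) (hy : y ∈ l)
    (hxy : x ≠ y) : ∃ c d, c ≠ d ∧ (l.filter (pairPred x y)).dedup = [c, d] := by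
  have hperm : (l.filter (pairPred x y)).dedup ~ [x, y] := by
    rw [perm_ext_iff_of_nodup (nodup_dedup _) (by simp [hxy])]
    intro a
    simp only [mem_dedup, mem_filter, pairPred, decide_eq_true_eq, mem_cons, not_mem_nil,
      or_false]
    constructor
    · exact And.right
    · rintro (rfl | rfl) <;> simp [hx, hy]
  match h : (l.filter (pairPred x y)).dedup, hperm.length_eq with
  | [c, d], _ =>
    have hnd := nodup_dedup (l.filter (pairPred x y))
    rw [h] at hnd
    exact ⟨c, d, by simpa using hnd, rfl⟩

theorem pattern11Count_filter_append_of_prefix {v P : List α} {n : ℕ}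
    (hP : P <+: (replicate n v.dedup).flatten) {x y : α} (hx : x ∈ v) (hy : y ∈ v)
    (hxy : x ≠ y) :
    pattern11Count ((v ++ P).filter (pairPred x y)) = pattern11Count (v.filter (pairPred x y)) := by
  obtain ⟨c, d, hcd, hdedup⟩ := exists_dedup_filter_pairPred hx hy hxy
  have hP' := hP.filter (pairPred x y)
  rw [filter_flatten, map_replicate, ← dedup_filter, hdedup] at hP'
  rw [filter_append]
  exact pattern11Count_append_of_prefix_flatten_replicate (by simp [pattern11Count_cons_cons, hcd])
    (by simp [hcd.symm]) (by rw [← getLast?_dedup, hdedup]) hP'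

theorem filter_filter_pairPred {l : List α} (hl : l.Nodup)
    (q : α → Bool) {x y : α} (hx : x ∈ l) (hy : y ∈ l) :
    (l.filter q).filter (pairPred x y) =
      if q x then (if q y then l.filter (pairPred x y) else [x])
      else (if q y then [y] else []) := by
  have hsingle : ∀ a ∈ l, l.filter (· = a) = [a] := fun a ha => by
    rw [filter_eq, count_eq_one_of_mem hl ha, replicate_one]
  rw [filter_filter]
  split_ifs
  on_goal 2 => rw [← hsingle x hx]
  on_goal 3 => rw [← hsingle y hy]
  on_goal 4 => rw [← filter_false l]
  all_goals
    refine filter_congr fun c _ => ?_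
    by_cases hcx : c = x <;> by_cases hcy : c = y <;> simp_all [pairPred]

theorem filter_pairPred_append_flatten_replicate (u T : List α) (n : ℕ) (x y : α) :
    (u ++ (replicate n T).flatten).filter (pairPred x y) =
      u.filter (pairPred x y) ++ (replicate n (T.filter (pairPred x y))).flatten := by
  simp [filter_append, filter_flatten, map_replicate]

theorem mem_of_pairPred {S : Set α} {x y : α} (hx : x ∈ S) (hy : y ∈ S) (c : α)
    (hc : pairPred x y c = true) : c ∈ S := by
  simp only [pairPred, decide_eq_true_eq] at hc
  rcases hc with rfl | rfl <;> assumption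

end Pairs

section Representants

variable {V : Type*} [DecidableEq V] {G : SimpleGraph V} {k : ℕ}

open List

structure IsK11RepOn (G : SimpleGraph V) (k : ℕ) (S : Set V) (w : List V) : Prop where
  mem : ∀ v ∈ S, v ∈ w
  mem_set : ∀ v ∈ w, v ∈ S
  adj_iff : ∀ x ∈ S, ∀ y ∈ S, x ≠ y →
    (G.Adj x y ↔ pattern11Count (w.filter (pairPred x y)) ≤ k)

theorem IsK11Rep.isK11RepOn_map_val {S : Set V} {w : List S} (h : IsK11Rep (G.induce S) k w) :
    IsK11RepOn G k S (w.map Subtype.val) where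
  mem v hv := mem_map.2 ⟨⟨v, hv⟩, h.1 _, rfl⟩
  mem_set v hv := by
    obtain ⟨a, -, rfl⟩ := mem_map.1 hv
    exact a.2
  adj_iff x hx y hy hxy := by
    have hpair : pairPred x y ∘ Subtype.val = pairPred (⟨x, hx⟩ : S) ⟨y, hy⟩ := by
      funext a; simp [pairPred, Subtype.ext_iff]
    rw [filter_map, hpair, pattern11Count_map Subtype.val_injective]
    exact h.2 ⟨x, hx⟩ ⟨y, hy⟩ (by simpa [Subtype.ext_iff] using hxy)

namespace IsK11RepOn

variable {S : Set V} {v : List V}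

theorem append_of_prefix (h : IsK11RepOn G k S v) {P : List V} {n : ℕ}
    (hP : P <+: (replicate n v.dedup).flatten) : IsK11RepOn G k S (v ++ P) where
  mem x hx := mem_append_left _ (h.mem x hx)
  mem_set x hx := by
    rcases mem_append.1 hx with hx | hx
    · exact h.mem_set x hx
    · obtain ⟨l, hl, hxl⟩ := mem_flatten.1 (hP.subset hx)
      rw [eq_of_mem_replicate hl, mem_dedup] at hxl
      exact h.mem_set x hxl
  adj_iff x hx y hy hxy := by
    rw [pattern11Count_filter_append_of_prefix hP (h.mem x hx) (h.mem y hy) hxy]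
    exact h.adj_iff x hx y hy hxy

theorem exists_getLast?_eq (h : IsK11RepOn G k S v) {z : V} (hz : z ∈ S) (n : ℕ) :
    ∃ w, IsK11RepOn G k S w ∧ w.count z = v.count z + n + 1 ∧ w.getLast? = some z := by
  obtain ⟨r, q, hrq⟩ := append_of_mem (mem_dedup.2 (h.mem z hz))
  have hnd := hrq ▸ nodup_dedup v
  have hzr : z ∉ r := fun hzr => (nodup_append.1 hnd).2.2 z hzr z mem_cons_self rfl
  refine ⟨v ++ ((replicate n v.dedup).flatten ++ (r ++ [z])), h.append_of_prefix (n := n + 1) ?_,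
    ?_, by simp⟩
  · rw [replicate_succ', flatten_append, flatten_singleton, hrq]
    exact prefix_append_right_inj _ |>.2 ⟨q, by simp⟩
  · have hzv : count z v.dedup = 1 :=
      count_eq_one_of_mem (nodup_dedup v) (mem_dedup.2 (h.mem z hz))
    simp [count_flatten, hzv, count_eq_zero_of_not_mem hzr]
    omega

theorem exists_getLast?_filter_eq (h : IsK11RepOn G k S v) {z : V} (hz : z ∈ S) (n : ℕ) :
    ∃ w, IsK11RepOn G k S w ∧ w.count z = v.count z + n + 1 ∧
      ∀ u ∈ S, u ≠ z → (w.filter (pairPred u z)).getLast? = some u := by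
  obtain ⟨r, q, hrq⟩ := append_of_mem (mem_dedup.2 (h.mem z hz))
  have hnd := hrq ▸ nodup_dedup v
  have hzr : z ∉ r := fun hzr => (nodup_append.1 hnd).2.2 z hzr z mem_cons_self rfl
  have hzq : z ∉ q := (nodup_cons.1 (nodup_append.1 hnd).2.1).1
  refine ⟨v ++ ((replicate (n + 1) v.dedup).flatten ++ r), h.append_of_prefix (n := n + 2) ?_,
    ?_, fun u hu huz => ?_⟩
  · rw [replicate_succ' (n := n + 1), flatten_append, flatten_singleton, hrq]
    exact prefix_append_right_inj _ |>.2 ⟨z :: q, rfl⟩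
  · have hzv : count z v.dedup = 1 :=
      count_eq_one_of_mem (nodup_dedup v) (mem_dedup.2 (h.mem z hz))
    simp [count_flatten, hzv, count_eq_zero_of_not_mem hzr]
    omega
  · -- after the last `z` the word runs through `q ++ r`, which lists every other letter of `v`
    have hsplit : v ++ ((replicate (n + 1) v.dedup).flatten ++ r) =
        (v ++ (replicate n v.dedup).flatten ++ r ++ [z]) ++ (q ++ r) := by
      simp [replicate_succ', hrq]
    have huqr : u ∈ q ++ r := by
      have := hrq ▸ mem_dedup.2 (h.mem u hu)
      simp only [mem_append, mem_cons] at this ⊢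
      tauto
    have hlast : ((q ++ r).filter (pairPred u z)).getLast? = some u :=
      getLast?_eq_some_of_forall_eq (mem_filter.2 ⟨huqr, by simp [pairPred]⟩) fun b hb => by
        obtain ⟨hb, hpb⟩ := mem_filter.1 hb
        simp only [pairPred, decide_eq_true_eq] at hpb
        rcases hpb with rfl | rfl
        · rfl
        · simp_all
    rw [hsplit, filter_append, getLast?_append, hlast, Option.some_or]

end IsK11RepOn

end Representants

section Merge

variable {α : Type*} [DecidableEq α]

open List

-- The `i`-th block of `ys` and then the `i`-th block of `xs` (blocks being the maximal
-- `z`-free segments) are placed before the `i`-th shared `z`.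
def zMerge (z : α) : List α → List α → List α
  | [], ys => ys
  | x :: xs, [] => x :: xs
  | x :: xs, y :: ys =>
    if y ≠ z then y :: zMerge z (x :: xs) ys
    else if x ≠ z then x :: zMerge z xs (y :: ys)
    else z :: zMerge z xs ys
termination_by xs ys => xs.length + ys.length

theorem filter_zMerge_left {z : α} {p : α → Bool} {xs ys : List α}
    (hp : ∀ c ∈ ys, p c → c = z) (hcount : xs.count z = ys.count z) :
    (zMerge z xs ys).filter p = xs.filter p := by
  fun_induction zMerge z xs ys with
  | case1 ys =>
    refine filter_eq_nil_iff.2 fun c hc hpc => ?_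
    obtain rfl := hp c hc hpc
    exact (count_pos_iff.2 hc).ne' (by simpa using hcount.symm)
  | case2 x xs => rfl
  | case3 x xs y ys hy ih =>
    have hpy : p y = false := by
      by_contra h; exact hy (hp y mem_cons_self (by simpa using h))
    simp [filter_cons, hpy, ih (fun c hc => hp c (mem_cons_of_mem _ hc)) (by simp_all)]
  | case4 x xs y ys hy hx ih =>
    obtain rfl : y = z := not_not.1 hy
    simp [filter_cons, ih hp (by simp_all)]
  | case5 x xs y ys hy hx ih =>
    obtain ⟨rfl, rfl⟩ : x = z ∧ y = z := ⟨not_not.1 hx, not_not.1 hy⟩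
    simp [filter_cons, ih (fun c hc => hp c (mem_cons_of_mem _ hc)) (by simp_all)]

theorem filter_zMerge_right {z : α} {p : α → Bool} {xs ys : List α}
    (hp : ∀ c ∈ xs, p c → c = z) (hcount : xs.count z = ys.count z) :
    (zMerge z xs ys).filter p = ys.filter p := by
  fun_induction zMerge z xs ys with
  | case1 ys => rfl
  | case2 x xs =>
    refine filter_eq_nil_iff.2 fun c hc hpc => ?_
    obtain rfl := hp c hc hpc
    exact (count_pos_iff.2 hc).ne' (by simpa using hcount)
  | case3 x xs y ys hy ih =>
    simp [filter_cons, ih hp (by simp_all)]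
  | case4 x xs y ys hy hx ih =>
    obtain rfl : y = z := not_not.1 hy
    have hpx : p x = false := by
      by_contra h; exact hx (hp x mem_cons_self (by simpa using h))
    simp [filter_cons, hpx, ih (fun c hc => hp c (mem_cons_of_mem _ hc)) (by simp_all)]
  | case5 x xs y ys hy hx ih =>
    obtain ⟨rfl, rfl⟩ : x = z ∧ y = z := ⟨not_not.1 hx, not_not.1 hy⟩
    simp [filter_cons, ih (fun c hc => hp c (mem_cons_of_mem _ hc)) (by simp_all)]

end Merge

theorem Set.notMem_of_inter_eq_singleton {α : Type*} {s t : Set α} {z x : α}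
    (hinter : s ∩ t = {z}) (hx : x ∈ s) (hxz : x ≠ z) : x ∉ t :=
  fun hxt => hxz (Set.mem_singleton_iff.1 (hinter ▸ ⟨hx, hxt⟩))

theorem Set.pair_cases_of_inter_eq_singleton {α : Type*} {s t : Set α} {z : α}
    (hunion : s ∪ t = Set.univ) (hinter : s ∩ t = {z}) (x y : α) :
    (x ∈ s ∧ y ∈ s ∨ x ∈ t ∧ y ∈ t) ∨ (x ∈ s ∧ y ∈ t ∧ x ≠ z ∧ y ≠ z) ∨
      (x ∈ t ∧ y ∈ s ∧ x ≠ z ∧ y ≠ z) := by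
  obtain ⟨hzs, hzt⟩ : z ∈ s ∩ t := hinter ▸ rfl
  have hst : ∀ v, v ∈ s ∨ v ∈ t := fun v => by simp [← Set.mem_union, hunion]
  rcases hst x with hx | hx <;> rcases hst y with hy | hy <;>
    by_cases hxz : x = z <;> by_cases hyz : y = z <;> subst_vars <;> tauto

section CutTail

variable {V : Type*} [DecidableEq V] {V₁ V₂ : Set V} [DecidablePred (· ∈ V₁)]
  [DecidablePred (· ∈ V₂)] {z : V} {core : List V}

open List

variable (V₁ V₂ z) in
def cutTail (σ : List V) : List V :=
  σ.filter (fun c => c ∈ V₁ ∧ c ≠ z) ++ z :: σ.filter (fun c => c ∈ V₁ ∧ c ≠ z) ++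
    (σ.filter (fun c => c ∈ V₂ ∧ c ≠ z) ++ z :: σ.filter (fun c => c ∈ V₂ ∧ c ≠ z))

theorem filter_pairPred_cutTail_of_ne (hinter : V₁ ∩ V₂ = {z}) {σ : List V} (hσ : σ.Nodup)
    {x y : V} (hx : x ∈ σ) (hy : y ∈ σ) (hxz : x ≠ z) (hyz : y ≠ z)
    (hside : x ∈ V₁ ∧ y ∈ V₁ ∨ x ∈ V₂ ∧ y ∈ V₂) :
    (cutTail V₁ V₂ z σ).filter (pairPred x y) =
      σ.filter (pairPred x y) ++ σ.filter (pairPred x y) := by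
  have hzxy : pairPred x y z = false := by simp [pairPred, Ne.symm hxz, Ne.symm hyz]
  rcases hside with ⟨hx₁, hy₁⟩ | ⟨hx₂, hy₂⟩
  · simp [cutTail, filter_append, filter_filter_pairPred hσ _ hx hy, hx₁, hy₁, hxz, hyz, hzxy,
      Set.notMem_of_inter_eq_singleton hinter hx₁ hxz,
      Set.notMem_of_inter_eq_singleton hinter hy₁ hyz]
  · rw [Set.inter_comm] at hinter
    simp [cutTail, filter_append, filter_filter_pairPred hσ _ hx hy, hx₂, hy₂, hxz, hyz, hzxy,
      Set.notMem_of_inter_eq_singleton hinter hx₂ hxz,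
      Set.notMem_of_inter_eq_singleton hinter hy₂ hyz]

theorem filter_pairPred_cutTail_left (hinter : V₁ ∩ V₂ = {z}) {σ : List V} (hσ : σ.Nodup)
    {x : V} (hx : x ∈ σ) (hz : z ∈ σ) (hx₁ : x ∈ V₁) (hxz : x ≠ z) :
    (cutTail V₁ V₂ z σ).filter (pairPred x z) = [x, z, x, z] := by
  simp [cutTail, filter_append, filter_filter_pairPred hσ _ hx hz, hx₁, hxz, pairPred,
    Set.notMem_of_inter_eq_singleton hinter hx₁ hxz]

theorem filter_pairPred_cutTail_right (hinter : V₁ ∩ V₂ = {z}) {σ : List V} (hσ : σ.Nodup)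
    {x : V} (hx : x ∈ σ) (hz : z ∈ σ) (hx₂ : x ∈ V₂) (hxz : x ≠ z) :
    (cutTail V₁ V₂ z σ).filter (pairPred x z) = [z, x, z, x] := by
  rw [Set.inter_comm] at hinter
  simp [cutTail, filter_append, filter_filter_pairPred hσ _ hx hz, hx₂, hxz, pairPred,
    Set.notMem_of_inter_eq_singleton hinter hx₂ hxz]

theorem filter_pairPred_cutTail_cross (hinter : V₁ ∩ V₂ = {z}) {σ : List V} (hσ : σ.Nodup)
    {a b : V} (ha : a ∈ σ) (hb : b ∈ σ) (ha₁ : a ∈ V₁) (hb₂ : b ∈ V₂) (haz : a ≠ z) (hbz : b ≠ z) :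
    (cutTail V₁ V₂ z σ).filter (pairPred a b) = [a, a, b, b] := by
  have hzab : pairPred a b z = false := by simp [pairPred, Ne.symm haz, Ne.symm hbz]
  have hb₁ := Set.notMem_of_inter_eq_singleton (Set.inter_comm V₁ V₂ ▸ hinter) hb₂ hbz
  simp [cutTail, filter_append, filter_filter_pairPred hσ _ ha hb, ha₁, hb₂, haz, hbz, hzab, hb₁,
    Set.notMem_of_inter_eq_singleton hinter ha₁ haz]

theorem pattern11Count_filter_append_cutTail_of_same_side (hinter : V₁ ∩ V₂ = {z})
    (hmem : ∀ v, v ∈ core)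
    (hlast₁ : ∀ u ∈ V₁, u ≠ z → (core.filter (pairPred u z)).getLast? = some z)
    (hlast₂ : ∀ u ∈ V₂, u ≠ z → (core.filter (pairPred u z)).getLast? = some u)
    {x y : V} (hxy : x ≠ y) (hside : x ∈ V₁ ∧ y ∈ V₁ ∨ x ∈ V₂ ∧ y ∈ V₂) (n : ℕ) :
    pattern11Count ((core ++ (replicate n (cutTail V₁ V₂ z core.dedup)).flatten).filter
      (pairPred x y)) = pattern11Count (core.filter (pairPred x y)) := by
  have hσ : ∀ v, v ∈ core.dedup := fun v => mem_dedup.2 (hmem v)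
  wlog hxz : x ≠ z generalizing x y
  · rw [pairPred_comm]
    exact this hxy.symm (by tauto) (by rintro rfl; exact hxz (by simpa using hxy))
  rw [filter_pairPred_append_flatten_replicate]
  by_cases hyz : y = z
  · subst hyz
    rcases hside with ⟨hx, -⟩ | ⟨hx, -⟩
    · rw [filter_pairPred_cutTail_left hinter (nodup_dedup core) (hσ x) (hσ y) hx hxz]
      exact pattern11Count_append_flatten_replicate_alternating hxz (hlast₁ x hx hxz) _
    · rw [filter_pairPred_cutTail_right hinter (nodup_dedup core) (hσ x) (hσ y) hx hxz]
      exact pattern11Count_append_flatten_replicate_alternating (Ne.symm hxz) (hlast₂ x hx hxz) _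
  · obtain ⟨c, d, hcd, hσxy⟩ := exists_dedup_filter_pairPred (hmem x) (hmem y) hxy
    rw [filter_pairPred_cutTail_of_ne hinter (nodup_dedup core) (hσ x) (hσ y) hxz hyz hside,
      ← dedup_filter, hσxy]
    exact pattern11Count_append_flatten_replicate_alternating hcd
      (by rw [← getLast?_dedup, hσxy]; rfl) _

theorem two_mul_le_pattern11Count_filter_append_cutTail (hinter : V₁ ∩ V₂ = {z})
    (hmem : ∀ v, v ∈ core) {a b : V} (ha : a ∈ V₁) (hb : b ∈ V₂) (haz : a ≠ z) (hbz : b ≠ z)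
    (n : ℕ) :
    2 * n ≤ pattern11Count ((core ++ (replicate n (cutTail V₁ V₂ z core.dedup)).flatten).filter
      (pairPred a b)) := by
  have hab : a ≠ b := fun h => Set.notMem_of_inter_eq_singleton hinter ha haz (h ▸ hb)
  have hσ : ∀ v, v ∈ core.dedup := fun v => mem_dedup.2 (hmem v)
  rw [filter_pairPred_append_flatten_replicate,
    filter_pairPred_cutTail_cross hinter (nodup_dedup core) (hσ a) (hσ b) ha hb haz hbz]
  have := mul_le_pattern11Count_append_flatten_replicate (core.filter (pairPred a b))
    [a, a, b, b] n
  simp only [pattern11Count_cons_cons, hab, if_true, if_false, pattern11Count_singleton] at this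
  omega

end CutTail

section Glue

variable {V : Type*} [DecidableEq V] {G : SimpleGraph V} {k : ℕ} {V₁ V₂ : Set V} {z : V}
  {core : List V}

open List

theorem k11Representable_of_core (hunion : V₁ ∪ V₂ = Set.univ) (hinter : V₁ ∩ V₂ = {z})
    (hsep : ∀ a ∈ V₁, ∀ b ∈ V₂, a ≠ z → b ≠ z → ¬ G.Adj a b) (hmem : ∀ v, v ∈ core)
    (hadj : ∀ x y, x ≠ y → (x ∈ V₁ ∧ y ∈ V₁ ∨ x ∈ V₂ ∧ y ∈ V₂) →
      (G.Adj x y ↔ pattern11Count (core.filter (pairPred x y)) ≤ k))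
    (hlast₁ : ∀ u ∈ V₁, u ≠ z → (core.filter (pairPred u z)).getLast? = some z)
    (hlast₂ : ∀ u ∈ V₂, u ≠ z → (core.filter (pairPred u z)).getLast? = some u) :
    K11Representable G k := by
  classical
  refine ⟨core ++ (replicate (k + 1) (cutTail V₁ V₂ z core.dedup)).flatten,
    fun v => mem_append_left _ (hmem v), fun x y hxy => ?_⟩
  change G.Adj x y ↔ pattern11Count ((core ++ _).filter (pairPred x y)) ≤ k
  rcases Set.pair_cases_of_inter_eq_singleton hunion hinter x y with hside | ⟨hx, hy, hxz, hyz⟩ |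
    ⟨hx, hy, hxz, hyz⟩
  · rw [pattern11Count_filter_append_cutTail_of_same_side hinter hmem hlast₁ hlast₂ hxy hside]
    exact hadj x y hxy hside
  · have := two_mul_le_pattern11Count_filter_append_cutTail hinter hmem hx hy hxz hyz (k + 1)
    exact iff_of_false (hsep x hx y hy hxz hyz) (by omega)
  · have := two_mul_le_pattern11Count_filter_append_cutTail hinter hmem hy hx hyz hxz (k + 1)
    rw [pairPred_comm] at this
    exact iff_of_false (fun h => hsep y hy x hx hyz hxz h.symm) (by omega)

theorem k11Representable_of_zMerge (hunion : V₁ ∪ V₂ = Set.univ) (hinter : V₁ ∩ V₂ = {z})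
    (hsep : ∀ a ∈ V₁, ∀ b ∈ V₂, a ≠ z → b ≠ z → ¬ G.Adj a b) {w₁ w₂ : List V}
    (hw₁ : IsK11RepOn G k V₁ w₁) (hw₂ : IsK11RepOn G k V₂ w₂) (hcount : w₁.count z = w₂.count z)
    (hlast₁ : w₁.getLast? = some z)
    (hlast₂ : ∀ u ∈ V₂, u ≠ z → (w₂.filter (pairPred u z)).getLast? = some u) :
    K11Representable G k := by
  have hz : z ∈ V₁ ∩ V₂ := hinter ▸ rfl
  have honly : ∀ c ∈ V₁, c ∈ V₂ → c = z := fun c h₁ h₂ =>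
    Set.mem_singleton_iff.1 (hinter ▸ ⟨h₁, h₂⟩)
  have hfilter₁ : ∀ {x y}, x ∈ V₁ → y ∈ V₁ →
      (zMerge z w₁ w₂).filter (pairPred x y) = w₁.filter (pairPred x y) := fun hx hy =>
    filter_zMerge_left (fun c hc hpc => honly c (mem_of_pairPred hx hy c hpc) (hw₂.mem_set c hc))
      hcount
  have hfilter₂ : ∀ {x y}, x ∈ V₂ → y ∈ V₂ →
      (zMerge z w₁ w₂).filter (pairPred x y) = w₂.filter (pairPred x y) := fun hx hy =>
    filter_zMerge_right (fun c hc hpc => honly c (hw₁.mem_set c hc) (mem_of_pairPred hx hy c hpc))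
      hcount
  refine k11Representable_of_core hunion hinter hsep (core := zMerge z w₁ w₂) (fun v => ?_) ?_ ?_ ?_
  · have hv : v ∈ (zMerge z w₁ w₂).filter (pairPred v v) := by
      rcases (Set.ext_iff.1 hunion v).2 trivial with hv | hv
      · rw [hfilter₁ hv hv]; exact mem_filter.2 ⟨hw₁.mem v hv, by simp [pairPred]⟩
      · rw [hfilter₂ hv hv]; exact mem_filter.2 ⟨hw₂.mem v hv, by simp [pairPred]⟩
    exact (mem_filter.1 hv).1
  · rintro x y hxy (⟨hx, hy⟩ | ⟨hx, hy⟩)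
    · rw [hfilter₁ hx hy]; exact hw₁.adj_iff x hx y hy hxy
    · rw [hfilter₂ hx hy]; exact hw₂.adj_iff x hx y hy hxy
  · intro u hu _
    obtain ⟨w, rfl⟩ := getLast?_eq_some_iff.1 hlast₁
    simp [hfilter₁ hu hz.1, filter_append, pairPred]
  · intro u hu huz
    rw [hfilter₂ hu hz.2]
    exact hlast₂ u hu huz

end Glue

theorem k11Representable_glue_vertex_general {V : Type*} [DecidableEq V] (k : ℕ)
    (G : SimpleGraph V) (V₁ V₂ : Set V) (z : V)
    (hunion : V₁ ∪ V₂ = Set.univ) (hinter : V₁ ∩ V₂ = {z})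
    (hsep : ∀ a ∈ V₁, ∀ b ∈ V₂, a ≠ z → b ≠ z → ¬ G.Adj a b)
    (h1 : K11Representable (G.induce V₁) k) (h2 : K11Representable (G.induce V₂) k) :
    K11Representable G k := by
  obtain ⟨v₁, hv₁⟩ := h1
  obtain ⟨v₂, hv₂⟩ := h2
  have hz : z ∈ V₁ ∩ V₂ := hinter ▸ rfl
  obtain ⟨w₁, hw₁, hcount₁, hlast₁⟩ :=
    hv₁.isK11RepOn_map_val.exists_getLast?_eq hz.1 ((v₂.map Subtype.val).count z)
  obtain ⟨w₂, hw₂, hcount₂, hlast₂⟩ :=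
    hv₂.isK11RepOn_map_val.exists_getLast?_filter_eq hz.2 ((v₁.map Subtype.val).count z)
  exact k11Representable_of_zMerge hunion hinter hsep hw₁ hw₂ (by omega) hlast₁ hlast₂

/-- glueing two `k`-11-representable graphs at a single vertex yields a
`k`-11-representable graph. -/
theorem k11Representable_glue_vertex {V : Type*} [DecidableEq V] [Fintype V] (k : ℕ)
    (G : SimpleGraph V) (V₁ V₂ : Set V) (z : V)
    (hunion : V₁ ∪ V₂ = Set.univ) (hinter : V₁ ∩ V₂ = {z})
    (hsep : ∀ a ∈ V₁, ∀ b ∈ V₂, a ≠ z → b ≠ z → ¬ G.Adj a b)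
    (h1 : K11Representable (G.induce V₁) k) (h2 : K11Representable (G.induce V₂) k) :
    K11Representable G k :=
  k11Representable_glue_vertex_general k G V₁ V₂ z hunion hinter hsep h1 h2
end
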